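/- For integers m, n ≥ 2, the cycle hull number of the Cartesian product of complete graphs K_m □ K_n equals 3. -/

import Mathlib

/-!
A vertex outside `T` with at most one neighbour in `T` lies on no cycle of `G[T ∪ {w}]`. In
`K_m □ K_n` this makes every row, every column and every non-adjacent pair a proper cycle convex
set, and any two vertices lie in one of these, so no set of at most two vertices has full hull.
Three corners `(i₀, j₀), (i₀, j₁), (i₁, j₀)` of a rectangle do: triangles fill row `i₀` and
column `j₀`, and every other vertex `(i, j)` closes the 4-cycle through `(i₀, j)`, `(i₀, j₀)` and
`(i, j₀)`.
-/

open SimpleGraph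

variable {V α β : Type*}

/-- A set `S` is cycle convex in `G` if no vertex outside `S` lies on a cycle in the
subgraph induced by `S ∪ {w}`. -/
def CycleConvex (G : SimpleGraph V) (S : Set V) : Prop :=
  ∀ w : V, w ∉ S →
    ∀ c : (G.induce (insert w S)).Walk ⟨w, Set.mem_insert w S⟩ ⟨w, Set.mem_insert w S⟩,
      ¬ c.IsCycle

/-- The cycle convex hull of `S`: the smallest cycle convex set containing `S`. -/
def cycleHull (G : SimpleGraph V) (S : Set V) : Set V :=
  ⋂₀ {T : Set V | S ⊆ T ∧ CycleConvex G T}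

/-- The cycle hull number: minimum size of a set whose cycle convex hull is everything. -/
noncomputable def cycleHullNumber (G : SimpleGraph V) : ℕ :=
  sInf {n : ℕ | ∃ S : Set V, S.ncard = n ∧ cycleHull G S = Set.univ}

/-- The cycle convexity number: maximum size of a proper cycle convex set. -/
noncomputable def cycleConvexityNumber (G : SimpleGraph V) : ℕ :=
  sSup {n : ℕ | ∃ S : Set V, S.ncard = n ∧ CycleConvex G S ∧ S ≠ Set.univ}

/-- The independence number of a graph. -/
noncomputable def indepNumber (G : SimpleGraph V) : ℕ :=
  sSup {n : ℕ | ∃ S : Set V, S.ncard = n ∧ S.Pairwise fun a b => ¬ G.Adj a b}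

/-- The strong product of two simple graphs. -/
def strongProd (G : SimpleGraph α) (H : SimpleGraph β) : SimpleGraph (α × β) where
  Adj x y := (G.Adj x.1 y.1 ∧ x.2 = y.2) ∨ (x.1 = y.1 ∧ H.Adj x.2 y.2) ∨
    (G.Adj x.1 y.1 ∧ H.Adj x.2 y.2)
  symm.symm x y h := by
    rcases h with ⟨h1, h2⟩ | ⟨h1, h2⟩ | ⟨h1, h2⟩
    · exact Or.inl ⟨h1.symm, h2.symm⟩
    · exact Or.inr (Or.inl ⟨h1.symm, h2.symm⟩)
    · exact Or.inr (Or.inr ⟨h1.symm, h2.symm⟩)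
  loopless.irrefl x h := by
    rcases h with ⟨h1, _⟩ | ⟨_, h2⟩ | ⟨h1, _⟩
    · exact G.loopless.irrefl _ h1
    · exact H.loopless.irrefl _ h2
    · exact G.loopless.irrefl _ h1

/-- The lexicographic product of two simple graphs. -/
def lexProd (G : SimpleGraph α) (H : SimpleGraph β) : SimpleGraph (α × β) where
  Adj x y := G.Adj x.1 y.1 ∨ (x.1 = y.1 ∧ H.Adj x.2 y.2)
  symm.symm x y h := by
    rcases h with h1 | ⟨h1, h2⟩
    · exact Or.inl h1.symm
    · exact Or.inr ⟨h1.symm, h2.symm⟩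
  loopless.irrefl x h := by
    rcases h with h1 | ⟨_, h2⟩
    · exact G.loopless.irrefl _ h1
    · exact H.loopless.irrefl _ h2

theorem Set.exists_subset_pair_of_ncard_le_two [Nonempty V] {s : Set V} (hs : s.Finite)
    (h : s.ncard ≤ 2) : ∃ a b, s ⊆ {a, b} := by
  rcases s.eq_empty_or_nonempty with rfl | ⟨a, ha⟩
  · exact ⟨Classical.arbitrary V, Classical.arbitrary V, Set.empty_subset _⟩
  have hrest : (s \ {a}).ncard ≤ 1 := by
    rw [Set.ncard_sdiff_singleton_of_mem ha]
    omega
  obtain ⟨b, hb⟩ := (Set.ncard_le_one_iff_subset_singleton hs.sdiff).mp hrest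
  refine ⟨a, b, fun x hx => ?_⟩
  by_cases hxa : x = a
  · exact Or.inl hxa
  · exact Or.inr (hb ⟨hx, hxa⟩)

theorem SimpleGraph.Walk.IsCycle.exists_adj_adj_ne {G : SimpleGraph V} {u v : V}
    {c : G.Walk u u} (hc : c.IsCycle) (hv : v ∈ c.support) :
    ∃ x y, x ≠ y ∧ G.Adj v x ∧ G.Adj v y := by
  classical
  have hc' := hc.rotate hv
  exact ⟨_, _, hc'.snd_ne_penultimate, Walk.adj_snd hc'.not_nil,
    (Walk.adj_penultimate hc'.not_nil).symm⟩

section CycleConvex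

variable {G : SimpleGraph V} {S T : Set V}

theorem cycleConvex_of_adj_unique
    (h : ∀ w ∉ T, ∀ x ∈ T, ∀ y ∈ T, G.Adj w x → G.Adj w y → x = y) : CycleConvex G T := by
  intro w hw c hc
  obtain ⟨x, y, hxy, hwx, hwy⟩ := hc.exists_adj_adj_ne c.start_mem_support
  have hwx' : G.Adj w x := hwx
  have hwy' : G.Adj w y := hwy
  exact hxy (Subtype.ext (h w hw x (x.2.resolve_left hwx'.ne') y (y.2.resolve_left hwy'.ne')
    hwx' hwy'))

theorem cycleConvex_pair {a b : V} (hab : ¬ G.Adj a b) : CycleConvex G {a, b} := by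
  intro w hw c hc
  -- in `G[{w, a, b}]` every edge meets `w`, so the neighbours of `c.snd` all equal `w`
  have hedge : ∀ p q : ↥(insert w {a, b} : Set V), G.Adj p q → (p : V) = w ∨ (q : V) = w := by
    rintro ⟨p, rfl | rfl | rfl⟩ ⟨q, rfl | rfl | rfl⟩ hpq <;> simp_all [G.adj_comm]
  have hwx : G.Adj w c.snd := Walk.adj_snd hc.not_nil
  obtain ⟨y, z, hyz, hxy, hxz⟩ := hc.exists_adj_adj_ne (c.getVert_mem_support 1)
  have hy := (hedge _ _ hxy).resolve_left hwx.ne'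
  have hz := (hedge _ _ hxz).resolve_left hwx.ne'
  exact hyz (Subtype.ext (hy.trans hz.symm))

theorem CycleConvex.mem_of_isCycle (hT : CycleConvex G T) {w : V} {c : G.Walk w w}
    (hc : c.IsCycle) (hsupp : ∀ v ∈ c.support, v ∈ insert w T) : w ∈ T := by
  by_contra hw
  refine hT w hw (c.induce _ hsupp) ?_
  rw [← Walk.isCycle_map_iff_of_injective (f := (Embedding.induce _).toHom) Subtype.val_injective,
    Walk.map_induce]
  exact hc

theorem CycleConvex.mem_of_triangle (hT : CycleConvex G T) {w a b : V} (ha : a ∈ T)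
    (hb : b ∈ T) (hwa : G.Adj w a) (hab : G.Adj a b) (hbw : G.Adj b w) : w ∈ T := by
  refine hT.mem_of_isCycle (c := .cons hwa (.cons hab (.cons hbw .nil))) ?_ (by simp [ha, hb])
  simp [Walk.isCycle_def, hwa.ne, hab.ne, hbw.ne, hwa.ne.symm, hbw.ne.symm]

theorem CycleConvex.mem_of_square (hT : CycleConvex G T) {w a b c : V} (ha : a ∈ T)
    (hb : b ∈ T) (hc : c ∈ T) (hwa : G.Adj w a) (hab : G.Adj a b) (hbc : G.Adj b c)
    (hcw : G.Adj c w) (hwb : w ≠ b) (hac : a ≠ c) : w ∈ T := by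
  refine hT.mem_of_isCycle (c := .cons hwa (.cons hab (.cons hbc (.cons hcw .nil)))) ?_
    (by simp [ha, hb, hc])
  simp [Walk.isCycle_def, hwa.ne, hab.ne, hbc.ne, hcw.ne, hwb, hac, hwa.ne.symm, hcw.ne.symm,
    hwb.symm]

theorem cycleHull_eq_univ_iff :
    cycleHull G S = Set.univ ↔ ∀ T, S ⊆ T → CycleConvex G T → T = Set.univ := by
  simp [cycleHull, Set.sInter_eq_univ, and_imp]

theorem cycleHullNumber_eq {k : ℕ} (hS : ∃ S : Set V, S.ncard = k ∧ cycleHull G S = Set.univ)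
    (h : ∀ S : Set V, S.ncard < k → cycleHull G S ≠ Set.univ) : cycleHullNumber G = k :=
  le_antisymm (Nat.sInf_le hS) <| le_csInf ⟨k, hS⟩ fun _ ⟨S, hS, hhull⟩ =>
    not_lt.mp fun hlt => h S (hS ▸ hlt) hhull

end CycleConvex

section BoxProd

theorem cycleConvex_boxProd_setOf_fst_eq (G : SimpleGraph α) (H : SimpleGraph β) (i : α) :
    CycleConvex (G □ H) {p | p.1 = i} := by
  refine cycleConvex_of_adj_unique fun w hw x hx y hy hwx hwy => ?_
  simp only [Set.mem_ofPred_eq, boxProd_adj] at *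
  grind

theorem cycleConvex_boxProd_setOf_snd_eq (G : SimpleGraph α) (H : SimpleGraph β) (j : β) :
    CycleConvex (G □ H) {p | p.2 = j} := by
  refine cycleConvex_of_adj_unique fun w hw x hx y hy hwx hwy => ?_
  simp only [Set.mem_ofPred_eq, boxProd_adj] at *
  grind

theorem cycleHull_top_boxProd_top_eq_univ {i₀ i₁ : α} {j₀ j₁ : β} (hi : i₀ ≠ i₁) (hj : j₀ ≠ j₁) :
    cycleHull ((⊤ : SimpleGraph α) □ (⊤ : SimpleGraph β)) {(i₀, j₀), (i₀, j₁), (i₁, j₀)} =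
      Set.univ := by
  refine cycleHull_eq_univ_iff.mpr fun T hST hT => ?_
  have h00 : (i₀, j₀) ∈ T := hST (by simp)
  have h01 : (i₀, j₁) ∈ T := hST (by simp)
  have h10 : (i₁, j₀) ∈ T := hST (by simp)
  have hrow : ∀ j, (i₀, j) ∈ T := by
    intro j
    by_cases hj₀ : j = j₀
    · exact hj₀ ▸ h00
    by_cases hj₁ : j = j₁
    · exact hj₁ ▸ h01
    exact hT.mem_of_triangle h00 h01 (by simp [boxProd_adj, hj₀]) (by simp [boxProd_adj, hj])
      (by simp [boxProd_adj, Ne.symm hj₁])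
  have hcol : ∀ i, (i, j₀) ∈ T := by
    intro i
    by_cases hi₀ : i = i₀
    · exact hi₀ ▸ h00
    by_cases hi₁ : i = i₁
    · exact hi₁ ▸ h10
    exact hT.mem_of_triangle h00 h10 (by simp [boxProd_adj, hi₀]) (by simp [boxProd_adj, hi])
      (by simp [boxProd_adj, Ne.symm hi₁])
  refine Set.eq_univ_of_forall fun ⟨i, j⟩ => ?_
  by_cases hi₀ : i = i₀
  · exact hi₀ ▸ hrow j
  by_cases hj₀ : j = j₀
  · exact hj₀ ▸ hcol i
  exact hT.mem_of_square (hrow j) h00 (hcol i) (by simp [boxProd_adj, hi₀])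
    (by simp [boxProd_adj, hj₀]) (by simp [boxProd_adj, Ne.symm hi₀])
    (by simp [boxProd_adj, Ne.symm hj₀]) (by simp [hi₀]) (by simp [Ne.symm hi₀])

theorem cycleHull_top_boxProd_top_ne_univ_of_subset_pair [Nontrivial α] [Nontrivial β]
    {S : Set (α × β)} {a b : α × β} (hS : S ⊆ {a, b}) :
    cycleHull ((⊤ : SimpleGraph α) □ (⊤ : SimpleGraph β)) S ≠ Set.univ := by
  rw [Ne, cycleHull_eq_univ_iff]
  push Not
  by_cases h₁ : a.1 = b.1
  · obtain ⟨i, hi⟩ := exists_ne a.1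
    refine ⟨{p | p.1 = a.1}, hS.trans (by simp [Set.insert_subset_iff, h₁]),
      cycleConvex_boxProd_setOf_fst_eq _ _ _, Set.ne_univ_iff_exists_notMem _ |>.mpr ?_⟩
    exact ⟨(i, a.2), hi⟩
  by_cases h₂ : a.2 = b.2
  · obtain ⟨j, hj⟩ := exists_ne a.2
    refine ⟨{p | p.2 = a.2}, hS.trans (by simp [Set.insert_subset_iff, h₂]),
      cycleConvex_boxProd_setOf_snd_eq _ _ _, Set.ne_univ_iff_exists_notMem _ |>.mpr ?_⟩
    exact ⟨(a.1, j), hj⟩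
  refine ⟨{a, b}, hS, cycleConvex_pair (by simp [boxProd_adj, h₁, h₂]),
    Set.ne_univ_iff_exists_notMem _ |>.mpr ⟨(a.1, b.2), ?_⟩⟩
  simp [Prod.ext_iff, h₁, Ne.symm h₂]

theorem cycleHullNumber_top_boxProd_top [Finite α] [Finite β] [Nontrivial α] [Nontrivial β] :
    cycleHullNumber ((⊤ : SimpleGraph α) □ (⊤ : SimpleGraph β)) = 3 := by
  obtain ⟨i₀, i₁, hi⟩ := exists_pair_ne α
  obtain ⟨j₀, j₁, hj⟩ := exists_pair_ne β
  refine cycleHullNumber_eq ⟨_, ?_, cycleHull_top_boxProd_top_eq_univ hi hj⟩ fun S hS => ?_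
  · exact Set.ncard_eq_three.mpr ⟨_, _, _, by simp [hj], by simp [hi], by simp [hi], rfl⟩
  · obtain ⟨a, b, hab⟩ := Set.exists_subset_pair_of_ncard_le_two S.toFinite (by omega)
    exact cycleHull_top_boxProd_top_ne_univ_of_subset_pair hab

end BoxProd

theorem stmt_12 (m n : ℕ) (hm : 2 ≤ m) (hn : 2 ≤ n) :
    cycleHullNumber ((⊤ : SimpleGraph (Fin m)) □ (⊤ : SimpleGraph (Fin n))) = 3 := by
  have : Nontrivial (Fin m) := Fin.nontrivial_iff_two_le.mpr hm
  have : Nontrivial (Fin n) := Fin.nontrivial_iff_two_le.mpr hn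
  exact cycleHullNumber_top_boxProd_top
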